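/- Suppose Φ is an orthogonal basis of ℂ^n such that φ_μ ∈ Φ for every character μ of H and the assignment μ ↦ φ_μ is injective; set Φ₀ = Φ \ {φ_μ : μ ∈ Ĥ}, and for a character χ of G let m⁺(χ) = #{μ ∈ Ĥ : μ ∘ θ = χ}. If h i ≤ 1 for all i ∈ Fin n (the semistable range), then for every character χ of G one has ∑_{φ ∈ Φ₀} |P_χ(φ)|² / ⟨φ, φ⟩ = ∑_i (w i)(h i) − m⁺(χ) · |G|²/m. (This is the semistable exact average formula of the paper's Corollary (cor:semistable), in the linear-algebra form in which it is proved.) -/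

import Mathlib

/-!
The period `P_χ(φ)` is the weighted inner product of `φ` with `ψ i = w i * ∑_{x t = i} χ t`, so
Parseval's identity for the orthogonal basis `Φ` gives `∑_{φ ∈ Φ} |P_χ(φ)|² / ⟨φ, φ⟩ = ⟨ψ, ψ⟩`,
and `⟨ψ, ψ⟩ = ∑ i, w i * h i` as soon as every fibre of `x` has at most one point. The vectors
`φ_μ` are removed from the sum by subtracting their contributions: `P_χ(φ_μ)` is the character sum
`∑_t (μ ∘ θ)(t) χ(t)⁻¹`, which is `|G|` when `μ ∘ θ = χ` and `0` otherwise, and `⟨φ_μ, φ_μ⟩ = m`.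
-/

open Finset ComplexConjugate

section WeightedInner

variable {ι : Type*} [Fintype ι] (w : ι → ℝ)

noncomputable def weightedInner (φ ψ : ι → ℂ) : ℂ :=
  ∑ i, (w i : ℂ)⁻¹ * φ i * conj (ψ i)

noncomputable def weightedNormSq (φ : ι → ℂ) : ℝ :=
  ∑ i, (w i)⁻¹ * ‖φ i‖ ^ 2

lemma weightedInner_self (φ : ι → ℂ) : weightedInner w φ φ = weightedNormSq w φ := by
  simp only [weightedInner, weightedNormSq, mul_assoc, Complex.mul_conj, Complex.normSq_eq_norm_sq]
  push_cast
  rfl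

lemma weightedInner_sum_smul_left {κ : Type*} (s : Finset κ) (c : κ → ℂ) (φ : κ → ι → ℂ)
    (ψ : ι → ℂ) :
    weightedInner w (∑ k ∈ s, c k • φ k) ψ = ∑ k ∈ s, c k * weightedInner w (φ k) ψ := by
  simp only [weightedInner, Finset.sum_apply, Pi.smul_apply, smul_eq_mul, sum_mul, mul_sum]
  rw [sum_comm]
  exact sum_congr rfl fun _ _ => sum_congr rfl fun _ _ => by ring

lemma weightedInner_sum_smul_right {κ : Type*} (s : Finset κ) (c : κ → ℂ) (φ : ι → ℂ)
    (ψ : κ → ι → ℂ) :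
    weightedInner w φ (∑ k ∈ s, c k • ψ k) = ∑ k ∈ s, conj (c k) * weightedInner w φ (ψ k) := by
  simp only [weightedInner, Finset.sum_apply, Pi.smul_apply, smul_eq_mul, map_sum, map_mul,
    mul_sum]
  rw [sum_comm]
  exact sum_congr rfl fun _ _ => sum_congr rfl fun _ _ => by ring

theorem sum_norm_weightedInner_sq_div_weightedNormSq {Φ : Finset (ι → ℂ)}
    (horth : ∀ φ ∈ Φ, ∀ ψ ∈ Φ, φ ≠ ψ → weightedInner w φ ψ = 0)
    (hspan : Submodule.span ℂ (Φ : Set (ι → ℂ)) = ⊤) (ψ : ι → ℂ) :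
    ∑ φ ∈ Φ, ‖weightedInner w φ ψ‖ ^ 2 / weightedNormSq w φ = weightedNormSq w ψ := by
  obtain ⟨c, -, rfl⟩ := Submodule.mem_span_finset.mp (hspan ▸ Submodule.mem_top : ψ ∈ _)
  have hcoeff : ∀ φ ∈ Φ, weightedInner w φ (∑ φ' ∈ Φ, c φ' • φ') =
      conj (c φ) * weightedNormSq w φ := fun φ hφ => by
    rw [weightedInner_sum_smul_right, sum_eq_single φ (fun φ' hφ' hne => by
      rw [horth φ hφ φ' hφ' hne.symm, mul_zero]) (absurd hφ), weightedInner_self]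
  apply Complex.ofReal_injective
  rw [← weightedInner_self, weightedInner_sum_smul_left, Complex.ofReal_sum]
  refine sum_congr rfl fun φ hφ => ?_
  rw [hcoeff φ hφ, ← mul_assoc, Complex.mul_conj, Complex.normSq_eq_norm_sq, norm_mul,
    Complex.norm_conj, Complex.norm_real, Real.norm_eq_abs, mul_pow, sq_abs, mul_div_assoc,
    sq (weightedNormSq w φ), mul_self_div_self]
  push_cast
  ring

end WeightedInner

section Characters

variable {G : Type*} [Group G] [Fintype G]

lemma norm_coe_monoidHom_units_apply (χ : G →* ℂˣ) (t : G) : ‖(χ t : ℂ)‖ = 1 :=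
  Complex.norm_eq_one_of_pow_eq_one (n := Fintype.card G)
    (by rw [← Units.val_pow_eq_pow_val, ← map_pow, pow_card_eq_one, map_one, Units.val_one])
    Fintype.card_ne_zero

lemma sum_coe_apply_mul_inv_coe_apply (ξ χ : G →* ℂˣ) [Decidable (ξ = χ)] :
    ∑ t, (ξ t : ℂ) * (χ t : ℂ)⁻¹ = if ξ = χ then (Fintype.card G : ℂ) else 0 := by
  have hquot : ∀ t, (ξ t : ℂ) * (χ t : ℂ)⁻¹ = (Units.coeHom ℂ).comp (ξ * χ⁻¹) t := fun t => by
    simp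
  have htriv : (Units.coeHom ℂ).comp (ξ * χ⁻¹) = 1 ↔ ξ = χ := by
    rw [← mul_inv_eq_one (a := ξ)]
    simp only [MonoidHom.ext_iff, MonoidHom.comp_apply, Units.coeHom_apply, MonoidHom.one_apply,
      Units.val_eq_one]
  classical
  simp_rw [hquot, sum_hom_units, htriv, Nat.cast_ite, Nat.cast_zero]

end Characters

section Periods

variable {ι G : Type*} [Fintype ι] [DecidableEq ι] [Group G] [Fintype G]
  (w : ι → ℝ) (x : G → ι) (χ : G →* ℂˣ)

noncomputable def periodVector : ι → ℂ :=
  fun i => w i * ∑ t with x t = i, (χ t : ℂ)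

lemma sum_mul_inv_eq_weightedInner_periodVector (hw : ∀ i, w i ≠ 0) (φ : ι → ℂ) :
    ∑ t, φ (x t) * (χ t : ℂ)⁻¹ = weightedInner w φ (periodVector w x χ) := by
  rw [← sum_fiberwise univ x]
  refine sum_congr rfl fun i _ => ?_
  have hw' : (w i : ℂ) ≠ 0 := Complex.ofReal_ne_zero.mpr (hw i)
  rw [sum_congr rfl fun t ht => by rw [(mem_filter.mp ht).2]]
  simp only [periodVector, map_mul, Complex.conj_ofReal, map_sum,
    ← Complex.inv_eq_conj (norm_coe_monoidHom_units_apply χ _), mul_sum]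
  field_simp

lemma norm_sum_coe_apply_sq_of_card_le_one {s : Finset G} (hs : #s ≤ 1) :
    ‖∑ t ∈ s, (χ t : ℂ)‖ ^ 2 = #s := by
  rcases Nat.le_one_iff_eq_zero_or_eq_one.mp hs with hs | hs
  · simp [card_eq_zero.mp hs]
  · obtain ⟨t, rfl⟩ := card_eq_one.mp hs
    simp [norm_coe_monoidHom_units_apply]

lemma weightedNormSq_periodVector (hx : ∀ i, #{t | x t = i} ≤ 1) :
    weightedNormSq w (periodVector w x χ) = ∑ i, w i * #{t | x t = i} := by
  refine sum_congr rfl fun i _ => ?_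
  rw [periodVector, norm_mul, Complex.norm_real, mul_pow,
    norm_sum_coe_apply_sq_of_card_le_one χ (hx i), Real.norm_eq_abs, sq_abs, sq, ← mul_assoc,
    ← mul_assoc, inv_mul_mul_self]

end Periods

section Eisenstein

variable {ι G H : Type*} [Fintype ι] [Group G] [Fintype G] [Group H] [Fintype H]

lemma weightedNormSq_monoidHom_apply_comp (w : ι → ℝ) (μ : H →* ℂˣ) (ν : ι → H) :
    weightedNormSq w (fun i => (μ (ν i) : ℂ)) = ∑ i, (w i)⁻¹ := by
  simp [weightedNormSq, norm_coe_monoidHom_units_apply]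

lemma sum_norm_period_sq_div_weightedNormSq_monoidHom [Fintype (H →* ℂˣ)] (w : ι → ℝ)
    (x : G → ι) (θ : G →* H) (ν : ι → H) (hν : ∀ t, ν (x t) = θ t) (χ : G →* ℂˣ)
    [DecidablePred fun μ : H →* ℂˣ => μ.comp θ = χ] :
    ∑ μ : H →* ℂˣ, ‖∑ t, (μ (ν (x t)) : ℂ) * (χ t : ℂ)⁻¹‖ ^ 2 /
        weightedNormSq w (fun i => (μ (ν i) : ℂ))
      = #{μ : H →* ℂˣ | μ.comp θ = χ} * (Fintype.card G : ℝ) ^ 2 / ∑ i, (w i)⁻¹ := by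
  simp_rw [hν, weightedNormSq_monoidHom_apply_comp, ← MonoidHom.comp_apply,
    sum_coe_apply_mul_inv_coe_apply, apply_ite (‖·‖ ^ 2 / ∑ i, (w i)⁻¹)]
  simp only [Complex.norm_natCast, norm_zero, zero_pow two_ne_zero, zero_div]
  rw [← sum_filter, sum_const, nsmul_eq_mul, mul_div_assoc]

end Eisenstein

open scoped Classical in
theorem semistable_exact_period_average_general
    (n : ℕ) (w : Fin n → ℝ) (hw : ∀ i, 0 < w i)
    (G : Type*) [CommGroup G] [Fintype G]
    (H : Type*) [CommGroup H] [Fintype H] [Fintype (H →* ℂˣ)]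
    (x : G → Fin n) (θ : G →* H) (ν : Fin n → H)
    (hν : ∀ t : G, ν (x t) = θ t)
    (Φ : Finset (Fin n → ℂ))
    (hΦorth : ∀ φ ∈ Φ, ∀ ψ ∈ Φ, φ ≠ ψ →
      ∑ i, ((w i : ℂ))⁻¹ * φ i * (starRingEnd ℂ) (ψ i) = 0)
    (hΦspan : Submodule.span ℂ (Φ : Set (Fin n → ℂ)) = ⊤)
    (hEis : ∀ μ : H →* ℂˣ, (fun i => ((μ (ν i) : ℂ))) ∈ Φ)
    (hinj : Function.Injective (fun (μ : H →* ℂˣ) => (fun i => ((μ (ν i) : ℂ)))))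
    (hsemi : ∀ i, (Finset.univ.filter (fun t : G => x t = i)).card ≤ 1)
    (χ : G →* ℂˣ) :
    ∑ φ ∈ Φ.filter (fun φ => ∀ μ : H →* ℂˣ, φ ≠ fun i => ((μ (ν i) : ℂ))),
        ‖∑ t : G, φ (x t) * ((χ t : ℂ))⁻¹‖ ^ 2 /
          (∑ i, (w i)⁻¹ * ‖φ i‖ ^ 2)
      = ∑ i, w i * ((Finset.univ.filter (fun t : G => x t = i)).card : ℝ)
          - ((Finset.univ.filter (fun μ : H →* ℂˣ => μ.comp θ = χ)).card : ℝ)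
              * (Fintype.card G : ℝ) ^ 2 / (∑ i, (w i)⁻¹) := by
  set eis : (H →* ℂˣ) → Fin n → ℂ := fun μ i => μ (ν i)
  have hΦ₀ : Φ.filter (fun φ => ∀ μ, φ ≠ eis μ) = Φ \ univ.image eis := by
    ext φ
    simp [eq_comm]
  have heisΦ : univ.image eis ⊆ Φ := by
    simpa [subset_iff] using hEis
  have htotal : ∑ φ ∈ Φ, ‖∑ t, φ (x t) * (χ t : ℂ)⁻¹‖ ^ 2 / weightedNormSq w φ
      = ∑ i, w i * #{t | x t = i} := by
    simp_rw [sum_mul_inv_eq_weightedInner_periodVector w x χ fun i => (hw i).ne']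
    rw [sum_norm_weightedInner_sq_div_weightedNormSq w hΦorth hΦspan,
      weightedNormSq_periodVector w x χ hsemi]
  change ∑ φ ∈ _, ‖_‖ ^ 2 / weightedNormSq w φ = _
  rw [hΦ₀, sum_sdiff_eq_sub heisΦ, htotal, sum_image hinj.injOn,
    sum_norm_period_sq_div_weightedNormSq_monoidHom w x θ ν hν χ]

open scoped Classical in
theorem semistable_exact_period_average
    (n : ℕ) (hn : 1 ≤ n) (w : Fin n → ℝ) (hw : ∀ i, 0 < w i)
    (G : Type*) [CommGroup G] [Fintype G] [Fintype (G →* ℂˣ)]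
    (H : Type*) [CommGroup H] [Fintype H] [Fintype (H →* ℂˣ)]
    (x : G → Fin n) (θ : G →* H) (ν : Fin n → H)
    (hν : ∀ t : G, ν (x t) = θ t)
    (Φ : Finset (Fin n → ℂ))
    (hΦ0 : ∀ φ ∈ Φ, φ ≠ 0)
    (hΦorth : ∀ φ ∈ Φ, ∀ ψ ∈ Φ, φ ≠ ψ →
      ∑ i, ((w i : ℂ))⁻¹ * φ i * (starRingEnd ℂ) (ψ i) = 0)
    (hΦspan : Submodule.span ℂ (Φ : Set (Fin n → ℂ)) = ⊤)
    (hEis : ∀ μ : H →* ℂˣ, (fun i => ((μ (ν i) : ℂ))) ∈ Φ)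
    (hinj : Function.Injective (fun (μ : H →* ℂˣ) => (fun i => ((μ (ν i) : ℂ)))))
    (hsemi : ∀ i, (Finset.univ.filter (fun t : G => x t = i)).card ≤ 1)
    (χ : G →* ℂˣ) :
    ∑ φ ∈ Φ.filter (fun φ => ∀ μ : H →* ℂˣ, φ ≠ fun i => ((μ (ν i) : ℂ))),
        ‖∑ t : G, φ (x t) * ((χ t : ℂ))⁻¹‖ ^ 2 /
          (∑ i, (w i)⁻¹ * ‖φ i‖ ^ 2)
      = ∑ i, w i * ((Finset.univ.filter (fun t : G => x t = i)).card : ℝ)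
          - ((Finset.univ.filter (fun μ : H →* ℂˣ => μ.comp θ = χ)).card : ℝ)
              * (Fintype.card G : ℝ) ^ 2 / (∑ i, (w i)⁻¹) :=
  semistable_exact_period_average_general n w hw G H x θ ν hν Φ hΦorth hΦspan hEis hinj hsemi χ
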